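/- arXiv:2301.02633 — 2 statements merged into one kernel-verified Lean document; each statement's English description precedes it below -/
import Mathlib

section
/- Let n ≥ 1 and let P : EuclideanSpace ℝ (Fin n) → Matrix (Fin n) (Fin n) ℝ be a smooth skew-symmetric matrix-valued map (P_{jk} = −P_{kj}) satisfying the cyclic identity ∂_i P_{jk} + ∂_j P_{ki} + ∂_k P_{ij} = 0 at every point. Define (div P)_k = Σ_i ∂_i P_{ik}, |P|² = Σ_{j,k} P_{jk}², and |∇P|² = Σ_{i,j,k} (∂_i P_{jk})². Then at every point one has the Bochner-type identity (1/2) Δ(|P|²) = |∇P|² + 2 Σ_{j,k} P_{jk} ∂_j((div P)_k), where Δ is the Euclidean Laplacian. -/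
/-- The `i`-th partial derivative of a function on `EuclideanSpace ℝ (Fin n)`. -/
noncomputable def partialDeriv' {n : ℕ} (g : EuclideanSpace ℝ (Fin n) → ℝ) (i : Fin n)
    (x : EuclideanSpace ℝ (Fin n)) : ℝ :=
  fderiv ℝ g x (EuclideanSpace.single i 1)

namespace BochnerAux

variable {n : ℕ}

lemma pd_contDiff {g : EuclideanSpace ℝ (Fin n) → ℝ} (hg : ContDiff ℝ (⊤ : ℕ∞) g) (i : Fin n) :
    ContDiff ℝ (⊤ : ℕ∞) (partialDeriv' g i) := by
  have h : ContDiff ℝ (⊤ : ℕ∞) (fderiv ℝ g) := hg.fderiv_right (by simp)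
  exact h.clm_apply contDiff_const

lemma pd_sum {ι : Type*} (s : Finset ι) (f : ι → EuclideanSpace ℝ (Fin n) → ℝ)
    {x : EuclideanSpace ℝ (Fin n)} (hf : ∀ t ∈ s, DifferentiableAt ℝ (f t) x) (i : Fin n) :
    partialDeriv' (fun y => ∑ t ∈ s, f t y) i x = ∑ t ∈ s, partialDeriv' (f t) i x := by
  unfold partialDeriv'
  rw [fderiv_fun_sum hf]
  simp

lemma pd_mul {f g : EuclideanSpace ℝ (Fin n) → ℝ} {x : EuclideanSpace ℝ (Fin n)}
    (hf : DifferentiableAt ℝ f x) (hg : DifferentiableAt ℝ g x) (i : Fin n) :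
    partialDeriv' (fun y => f y * g y) i x
      = partialDeriv' f i x * g x + f x * partialDeriv' g i x := by
  unfold partialDeriv'
  rw [fderiv_fun_mul hf hg]
  simp; ring

lemma pd_neg {g h : EuclideanSpace ℝ (Fin n) → ℝ} (hgh : ∀ y, g y = - h y)
    (i : Fin n) (x : EuclideanSpace ℝ (Fin n)) :
    partialDeriv' g i x = - partialDeriv' h i x := by
  unfold partialDeriv'
  have : g = fun y => -(h y) := funext hgh
  rw [this, fderiv_fun_neg]
  simp

lemma pd_congr {g h : EuclideanSpace ℝ (Fin n) → ℝ} (hgh : ∀ y, g y = h y)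
    (i : Fin n) (x : EuclideanSpace ℝ (Fin n)) :
    partialDeriv' g i x = partialDeriv' h i x := by
  have : g = h := funext hgh
  rw [this]

lemma pd_comm {g : EuclideanSpace ℝ (Fin n) → ℝ} (hg : ContDiff ℝ (⊤ : ℕ∞) g)
    (i j : Fin n) (x : EuclideanSpace ℝ (Fin n)) :
    partialDeriv' (partialDeriv' g i) j x = partialDeriv' (partialDeriv' g j) i x := by
  have hd : Differentiable ℝ (fderiv ℝ g) := (hg.fderiv_right (m := (⊤ : ℕ∞)) (by simp)).differentiable (by simp)
  have key : ∀ v w : EuclideanSpace ℝ (Fin n),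
      fderiv ℝ (fun y => fderiv ℝ g y v) x w = fderiv ℝ (fderiv ℝ g) x w v := by
    intro v w
    rw [fderiv_clm_apply (hd x) (differentiableAt_const v)]
    simp
  have hsym : IsSymmSndFDerivAt ℝ g x :=
    hg.contDiffAt.isSymmSndFDerivAt (by rw [minSmoothness_of_isRCLikeNormedField]; exact WithTop.coe_le_coe.mpr le_top)
  unfold partialDeriv'
  rw [key, key, hsym]

lemma pd_add {f g : EuclideanSpace ℝ (Fin n) → ℝ} {x : EuclideanSpace ℝ (Fin n)}
    (hf : DifferentiableAt ℝ f x) (hg : DifferentiableAt ℝ g x) (i : Fin n) :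
    partialDeriv' (fun y => f y + g y) i x = partialDeriv' f i x + partialDeriv' g i x := by
  unfold partialDeriv'
  rw [fderiv_fun_add hf hg]
  simp

lemma pd_const_mul {f : EuclideanSpace ℝ (Fin n) → ℝ} {x : EuclideanSpace ℝ (Fin n)}
    (hf : DifferentiableAt ℝ f x) (c : ℝ) (i : Fin n) :
    partialDeriv' (fun y => c * f y) i x = c * partialDeriv' f i x := by
  unfold partialDeriv'
  rw [fderiv_const_mul hf]
  simp

lemma pd_sq {f : EuclideanSpace ℝ (Fin n) → ℝ} {x : EuclideanSpace ℝ (Fin n)}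
    (hf : DifferentiableAt ℝ f x) (i : Fin n) :
    partialDeriv' (fun y => f y ^ 2) i x = 2 * (f x * partialDeriv' f i x) := by
  have h : partialDeriv' (fun y => f y ^ 2) i x = partialDeriv' (fun y => f y * f y) i x :=
    pd_congr (fun y => by ring) i x
  rw [h, pd_mul hf hf]
  ring

lemma pd_zero_fun (i : Fin n) (x : EuclideanSpace ℝ (Fin n)) :
    partialDeriv' (fun _ => (0 : ℝ)) i x = 0 := by
  simp [partialDeriv']

lemma sum_rotate {m : ℕ} (A : Fin m → Fin m → Fin m → ℝ) :
    ∑ i, ∑ j, ∑ k, A i j k = ∑ j, ∑ k, ∑ i, A i j k := by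
  rw [Finset.sum_comm]
  exact Finset.sum_congr rfl (fun j _ => Finset.sum_comm)

end BochnerAux

open BochnerAux in
/-- Euclidean Bochner-type identity for a smooth skew-symmetric matrix-valued map `P`
satisfying the cyclic identity:
`(1/2) Δ|P|² = |∇P|² + 2 Σ_{j,k} P_{jk} ∂_j (div P)_k`. -/

theorem bochner_type_identity (n : ℕ) (hn : 1 ≤ n)
    (P : EuclideanSpace ℝ (Fin n) → Matrix (Fin n) (Fin n) ℝ)
    (hsmooth : ∀ j k, ContDiff ℝ (⊤ : ℕ∞) (fun x => P x j k))
    (hskew : ∀ x j k, P x j k = - P x k j)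
    (hcyclic : ∀ (x : EuclideanSpace ℝ (Fin n)) (i j k : Fin n),
      partialDeriv' (fun y => P y j k) i x + partialDeriv' (fun y => P y k i) j x
        + partialDeriv' (fun y => P y i j) k x = 0)
    (divP : Fin n → EuclideanSpace ℝ (Fin n) → ℝ)
    (hdiv : ∀ k x, divP k x = ∑ i, partialDeriv' (fun y => P y i k) i x)
    (normPsq : EuclideanSpace ℝ (Fin n) → ℝ)
    (hnorm : ∀ x, normPsq x = ∑ j, ∑ k, (P x j k) ^ 2) :
    ∀ x : EuclideanSpace ℝ (Fin n),
      (1 / 2 : ℝ) * (∑ i, partialDeriv' (partialDeriv' normPsq i) i x)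
        = (∑ i, ∑ j, ∑ k, (partialDeriv' (fun y => P y j k) i x) ^ 2)
          + 2 * ∑ j, ∑ k, P x j k * partialDeriv' (divP k) j x := by
  intro x
  have hPd : ∀ j k, Differentiable ℝ (fun y => P y j k) := fun j k =>
    (hsmooth j k).differentiable (by simp)
  have hPd1 : ∀ j k i, ContDiff ℝ (⊤ : ℕ∞) (partialDeriv' (fun y => P y j k) i) := fun j k i =>
    pd_contDiff (hsmooth j k) i
  have hPd1d : ∀ j k i, Differentiable ℝ (partialDeriv' (fun y => P y j k) i) := fun j k i =>
    (hPd1 j k i).differentiable (by simp)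
  -- first derivative of normPsq
  have h1 : ∀ (i : Fin n) (y : EuclideanSpace ℝ (Fin n)),
      partialDeriv' normPsq i y
        = ∑ j, ∑ k, 2 * (P y j k * partialDeriv' (fun w => P w j k) i y) := by
    intro i y
    rw [pd_congr hnorm i y]
    rw [pd_sum _ _ (fun j _ => DifferentiableAt.fun_sum (fun k _ => ((hPd j k) y).fun_pow 2)) i]
    refine Finset.sum_congr rfl (fun j _ => ?_)
    rw [pd_sum _ _ (fun k _ => ((hPd j k) y).fun_pow 2) i]
    exact Finset.sum_congr rfl (fun k _ => pd_sq ((hPd j k) y) i)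
  -- second derivative of normPsq
  have h2 : ∀ i : Fin n,
      partialDeriv' (partialDeriv' normPsq i) i x
        = (∑ j, ∑ k, 2 * ((partialDeriv' (fun y => P y j k) i x) ^ 2))
          + ∑ j, ∑ k, 2 * (P x j k
              * partialDeriv' (partialDeriv' (fun y => P y j k) i) i x) := by
    intro i
    have hdiffjk : ∀ (j k : Fin n) (y : EuclideanSpace ℝ (Fin n)),
        DifferentiableAt ℝ
          (fun z => 2 * (P z j k * partialDeriv' (fun w => P w j k) i z)) y :=
      fun j k y => (((hPd j k) y).mul ((hPd1d j k i) y)).const_mul 2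
    rw [pd_congr (h1 i) i x]
    rw [pd_sum _ _ (fun j _ => DifferentiableAt.fun_sum (fun k _ => hdiffjk j k x)) i]
    rw [← Finset.sum_add_distrib]
    refine Finset.sum_congr rfl (fun j _ => ?_)
    rw [pd_sum _ _ (fun k _ => hdiffjk j k x) i, ← Finset.sum_add_distrib]
    refine Finset.sum_congr rfl (fun k _ => ?_)
    rw [pd_const_mul (((hPd j k) x).fun_mul ((hPd1d j k i) x)) 2 i,
      pd_mul ((hPd j k) x) ((hPd1d j k i) x)]
    ring
  -- Laplacian of P_{jk} via cyclic identity
  have hLap : ∀ j k : Fin n,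
      ∑ i, partialDeriv' (partialDeriv' (fun y => P y j k) i) i x
        = partialDeriv' (divP k) j x - partialDeriv' (divP j) k x := by
    intro j k
    have e1 : ∀ i : Fin n,
        partialDeriv' (partialDeriv' (fun y => P y j k) i) i x
          = -(partialDeriv' (partialDeriv' (fun y => P y k i) j) i x
              + partialDeriv' (partialDeriv' (fun y => P y i j) k) i x) := by
      intro i
      have hz : partialDeriv'
          (fun y => partialDeriv' (fun z => P z j k) i y
            + (partialDeriv' (fun z => P z k i) j y
              + partialDeriv' (fun z => P z i j) k y)) i x = 0 := by
        rw [pd_congr (h := fun _ => (0 : ℝ)) (fun y => by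
          show _ = (0 : ℝ)
          have := hcyclic y i j k; linarith) i x]
        exact pd_zero_fun i x
      rw [pd_add ((hPd1d j k i) x) (((hPd1d k i j) x).fun_add ((hPd1d i j k) x)) i,
        pd_add ((hPd1d k i j) x) ((hPd1d i j k) x) i] at hz
      linarith
    have e2 : ∀ i : Fin n,
        partialDeriv' (partialDeriv' (fun y => P y k i) j) i x
          = partialDeriv' (partialDeriv' (fun y => P y k i) i) j x :=
      fun i => pd_comm (hsmooth k i) j i x
    have e3 : ∀ i : Fin n,
        partialDeriv' (partialDeriv' (fun y => P y i j) k) i x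
          = partialDeriv' (partialDeriv' (fun y => P y i j) i) k x :=
      fun i => pd_comm (hsmooth i j) k i x
    have s2 : ∑ i, partialDeriv' (partialDeriv' (fun y => P y k i) i) j x
        = - partialDeriv' (divP k) j x := by
      rw [← pd_sum Finset.univ (fun i => partialDeriv' (fun y => P y k i) i)
        (fun i _ => (hPd1d k i i) x) j]
      exact pd_neg (fun y => by
        rw [hdiv k y, ← Finset.sum_neg_distrib]
        exact Finset.sum_congr rfl (fun i _ => pd_neg (fun z => hskew z k i) i y)) j x
    have s3 : ∑ i, partialDeriv' (partialDeriv' (fun y => P y i j) i) k x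
        = partialDeriv' (divP j) k x := by
      rw [← pd_sum Finset.univ (fun i => partialDeriv' (fun y => P y i j) i)
        (fun i _ => (hPd1d i j i) x) k]
      exact pd_congr (fun y => (hdiv j y).symm) k x
    calc ∑ i, partialDeriv' (partialDeriv' (fun y => P y j k) i) i x
        = ∑ i, -(partialDeriv' (partialDeriv' (fun y => P y k i) i) j x
            + partialDeriv' (partialDeriv' (fun y => P y i j) i) k x) := by
          refine Finset.sum_congr rfl (fun i _ => ?_)
          rw [e1 i, e2 i, e3 i]
      _ = -((∑ i, partialDeriv' (partialDeriv' (fun y => P y k i) i) j x)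
            + ∑ i, partialDeriv' (partialDeriv' (fun y => P y i j) i) k x) := by
          rw [Finset.sum_neg_distrib, Finset.sum_add_distrib]
      _ = partialDeriv' (divP k) j x - partialDeriv' (divP j) k x := by
          rw [s2, s3]; ring
  -- assemble
  have rearr : ∑ i, ∑ j, ∑ k, 2 * (P x j k
        * partialDeriv' (partialDeriv' (fun y => P y j k) i) i x)
      = 2 * ∑ j, ∑ k, P x j k
          * ∑ i, partialDeriv' (partialDeriv' (fun y => P y j k) i) i x := by
    rw [sum_rotate]
    rw [Finset.mul_sum]
    refine Finset.sum_congr rfl (fun j _ => ?_)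
    rw [Finset.mul_sum]
    refine Finset.sum_congr rfl (fun k _ => ?_)
    rw [Finset.mul_sum, Finset.mul_sum]
  have hmain : ∑ i, partialDeriv' (partialDeriv' normPsq i) i x
      = 2 * ((∑ i, ∑ j, ∑ k, (partialDeriv' (fun y => P y j k) i x) ^ 2)
          + ∑ j, ∑ k, P x j k
              * (partialDeriv' (divP k) j x - partialDeriv' (divP j) k x)) := by
    calc ∑ i, partialDeriv' (partialDeriv' normPsq i) i x
        = (∑ i, ∑ j, ∑ k, 2 * ((partialDeriv' (fun y => P y j k) i x) ^ 2))
          + ∑ i, ∑ j, ∑ k, 2 * (P x j k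
              * partialDeriv' (partialDeriv' (fun y => P y j k) i) i x) := by
          rw [← Finset.sum_add_distrib]
          exact Finset.sum_congr rfl (fun i _ => h2 i)
      _ = 2 * (∑ i, ∑ j, ∑ k, (partialDeriv' (fun y => P y j k) i x) ^ 2)
          + 2 * ∑ j, ∑ k, P x j k
              * ∑ i, partialDeriv' (partialDeriv' (fun y => P y j k) i) i x := by
          rw [rearr]
          congr 1
          simp [Finset.mul_sum]
      _ = 2 * ((∑ i, ∑ j, ∑ k, (partialDeriv' (fun y => P y j k) i x) ^ 2)
          + ∑ j, ∑ k, P x j k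
              * (partialDeriv' (divP k) j x - partialDeriv' (divP j) k x)) := by
          have hrw : ∑ j, ∑ k, P x j k
              * ∑ i, partialDeriv' (partialDeriv' (fun y => P y j k) i) i x
            = ∑ j, ∑ k, P x j k
              * (partialDeriv' (divP k) j x - partialDeriv' (divP j) k x) :=
            Finset.sum_congr rfl (fun j _ => Finset.sum_congr rfl (fun k _ => by
              rw [hLap j k]))
          rw [hrw]
          ring
  have hswap : ∑ j, ∑ k, P x j k * partialDeriv' (divP j) k x
      = - ∑ j, ∑ k, P x j k * partialDeriv' (divP k) j x := by
    rw [Finset.sum_comm]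
    rw [Finset.sum_congr rfl (fun j _ => Finset.sum_congr rfl (fun k _ => by
      rw [hskew x k j, neg_mul]))]
    simp only [Finset.sum_neg_distrib]
  rw [hmain]
  rw [Finset.sum_congr rfl (fun j _ => Finset.sum_congr rfl (fun k _ =>
    mul_sub (P x j k) _ _))]
  simp only [Finset.sum_sub_distrib]
  rw [hswap]
  ring
end

section
/- Let n ≥ 3, let f : EuclideanSpace ℝ (Fin n) → ℝ be smooth and let λ : ℝ → ℝ be smooth. Set w = |∇f|² (the squared Euclidean norm of the gradient of f) and define the skew-symmetric 2-tensor field P by P_{jk} = λ(f)(∂_j f · ∂_k w − ∂_k f · ∂_j w). Define (div P)_k = Σ_i ∂_i P_{ik}, |div P|² = Σ_k ((div P)_k)², and |∇P|² = Σ_{i,j,k} (∂_i P_{jk})². Then at every point one has |∇P|² ≥ (2/(n−1)) |div P|². -/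
open Finset in

lemma tensor_key (n : ℕ) (hn : 3 ≤ n) (t : Fin n → Fin n → Fin n → ℝ)
    (hs : ∀ i j k, t i j k = - t i k j) :
    (∑ i, ∑ j, ∑ k, (t i j k) ^ 2) ≥ (2 / (n - 1) : ℝ) * ∑ k, (∑ i, t i i k) ^ 2 := by
  have hdiag : ∀ i j, t i j j = 0 := by
    intro i j
    have := hs i j j
    linarith
  set S : ℝ := ∑ i, ∑ k ∈ univ.filter (· ≠ i), (t i i k) ^ 2 with hS
  have hcard : ∀ k : Fin n, (univ.filter (· ≠ k) : Finset (Fin n)).card = n - 1 := by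
    intro k
    rw [Finset.filter_ne', Finset.card_erase_of_mem (mem_univ k), card_univ, Fintype.card_fin]
  have hn1 : (0:ℝ) < (n:ℝ) - 1 := by
    have : (3:ℝ) ≤ (n:ℝ) := by exact_mod_cast hn
    linarith
  -- Step A : ∑ k, (∑ i, t i i k)^2 ≤ (n-1) * S'
  have stepA : ∑ k, (∑ i, t i i k) ^ 2
      ≤ ((n : ℝ) - 1) * ∑ k, ∑ i ∈ univ.filter (· ≠ k), (t i i k) ^ 2 := by
    rw [Finset.mul_sum]
    apply Finset.sum_le_sum
    intro k _
    have h1 : ∑ i, t i i k = ∑ i ∈ univ.filter (· ≠ k), t i i k := by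
      refine (Finset.sum_filter_of_ne ?_).symm
      intro i _ h hi
      subst hi
      exact h (hdiag i i)
    rw [h1]
    have := sq_sum_le_card_mul_sum_sq (s := univ.filter (· ≠ k)) (f := fun i => t i i k)
    calc (∑ i ∈ univ.filter (· ≠ k), t i i k) ^ 2
        ≤ ((univ.filter (· ≠ k)).card : ℝ) * ∑ i ∈ univ.filter (· ≠ k), (t i i k)^2 := by
          exact_mod_cast this
      _ = ((n:ℝ) - 1) * ∑ i ∈ univ.filter (· ≠ k), (t i i k)^2 := by
          rw [hcard k]
          congr 1
          have : (1:ℕ) ≤ n := by omega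
          push_cast [Nat.cast_sub this]
          ring
  -- swap: ∑ k ∑_{i≠k} = S
  have hswap : ∑ k, ∑ i ∈ univ.filter (· ≠ k), (t i i k) ^ 2 = S := by
    rw [hS]
    exact Finset.sum_comm' (fun k i => by
      simp only [Finset.mem_filter, Finset.mem_univ, true_and, and_true]
      exact ne_comm)
  -- Step B : ∑ i ∑ j ∑ k (t i j k)^2 ≥ 2 * S
  have stepB : (∑ i, ∑ j, ∑ k, (t i j k) ^ 2) ≥ 2 * S := by
    rw [hS, Finset.mul_sum]
    apply Finset.sum_le_sum
    intro i _
    -- split off j = i term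
    have hsplit : ∑ j, ∑ k, (t i j k)^2
        = (∑ k, (t i i k)^2) + ∑ j ∈ univ.erase i, ∑ k, (t i j k)^2 := by
      rw [← Finset.add_sum_erase _ _ (Finset.mem_univ i)]
    have h1 : ∑ k ∈ univ.filter (· ≠ i), (t i i k)^2 ≤ ∑ k, (t i i k)^2 :=
      Finset.sum_le_sum_of_subset_of_nonneg (Finset.filter_subset _ _)
        (fun _ _ _ => sq_nonneg _)
    have h2 : ∑ k ∈ univ.filter (· ≠ i), (t i i k)^2 ≤ ∑ j ∈ univ.erase i, ∑ k, (t i j k)^2 := by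
      rw [Finset.filter_ne']
      apply Finset.sum_le_sum
      intro j hj
      have : (t i i j)^2 = (t i j i)^2 := by rw [hs i i j]; ring
      rw [this]
      exact Finset.single_le_sum (fun k _ => sq_nonneg (t i j k)) (Finset.mem_univ i)
    rw [hsplit]
    linarith
  -- combine
  have hSnn : 0 ≤ S := Finset.sum_nonneg fun i _ => Finset.sum_nonneg fun k _ => sq_nonneg _
  rw [ge_iff_le, div_mul_eq_mul_div, div_le_iff₀ hn1]
  calc 2 * ∑ k, (∑ i, t i i k) ^ 2 ≤ 2 * (((n:ℝ)-1) * S) := by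
        rw [hswap] at stepA; linarith
    _ = (2 * S) * ((n:ℝ)-1) := by ring
    _ ≤ (∑ i, ∑ j, ∑ k, (t i j k) ^ 2) * ((n:ℝ)-1) := by
        apply mul_le_mul_of_nonneg_right stepB (le_of_lt hn1)


/-- Euclidean case of the Appendix Proposition: for the special skew-symmetric tensor
`P_{jk} = λ(f)(∂_j f ∂_k w - ∂_k f ∂_j w)` with `w = ‖∇f‖²`, one has
`|∇P|² ≥ (2/(n-1)) |div P|²`. -/
theorem grad_sq_ge_improved_div_sq (n : ℕ) (hn : 3 ≤ n)
    (f : EuclideanSpace ℝ (Fin n) → ℝ) (hf : ContDiff ℝ (⊤ : ℕ∞) f)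
    (lam : ℝ → ℝ) (hlam : ContDiff ℝ (⊤ : ℕ∞) lam)
    (w : EuclideanSpace ℝ (Fin n) → ℝ) (hw : ∀ x, w x = ‖gradient f x‖ ^ 2)
    (P : Fin n → Fin n → EuclideanSpace ℝ (Fin n) → ℝ)
    (hP : ∀ j k x, P j k x =
      lam (f x) * (partialDeriv' f j x * partialDeriv' w k x
        - partialDeriv' f k x * partialDeriv' w j x))
    (divP : Fin n → EuclideanSpace ℝ (Fin n) → ℝ)
    (hdiv : ∀ k x, divP k x = ∑ i, partialDeriv' (P i k) i x) :
    ∀ x : EuclideanSpace ℝ (Fin n),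
      (∑ i, ∑ j, ∑ k, (partialDeriv' (P j k) i x) ^ 2)
        ≥ (2 / (n - 1) : ℝ) * ∑ k, (divP k x) ^ 2 := by
  intro x
  have hskew : ∀ i j k, partialDeriv' (P j k) i x = - partialDeriv' (P k j) i x := by
    intro i j k
    have hfun : P j k = fun y => -(P k j y) := by
      funext y
      rw [hP, hP]
      ring
    rw [hfun]
    unfold partialDeriv'
    rw [fderiv_fun_neg]
    simp
  have := tensor_key n hn (fun i j k => partialDeriv' (P j k) i x) hskew
  simp only [hdiv]
  exact this
end
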